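/- arXiv:0706.1033 — 4 statements merged into one kernel-verified Lean document; each statement's English description precedes it below -/
import Mathlib

section
/- Every object of Set/P1 arises from a cartesian transformation to P: let P : Type u ⥤ Type u be a functor, C a type and f : C → P.obj PUnit a function. Define Q : Type u ⥤ Type u by Q.obj X := {(y, c) : P.obj X × C // P.map (fun _ => PUnit.unit) y = f c} and Q.map u (y, c) := (P.map u y, c). Then: (i) the first projections α_X : Q.obj X → P.obj X form a natural transformation α : Q ⟶ P; (ii) every naturality square of α is a pullback (α is cartesian); and (iii) the second projection β : Q.obj PUnit → C is a bijection with α.app PUnit = f ∘ β. -/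
universe u

open CategoryTheory

/-- The value at `X` of the functor `Q` obtained from an object `f : C → P.obj PUnit`
of `Set/P1`. -/
def Qobj (P : Type u ⥤ Type u) (C : Type u) (f : C → P.obj PUnit) (X : Type u) :
    Type u :=
  {yc : P.obj X × C // P.map (TypeCat.ofHom (fun _ => PUnit.unit) : X ⟶ PUnit) yc.1 = f yc.2}

/-- The functorial action of `Qobj`. -/
def Qmap (P : Type u ⥤ Type u) (C : Type u) (f : C → P.obj PUnit)
    {X Y : Type u} (u : X ⟶ Y) : Qobj P C f X → Qobj P C f Y :=
  fun q => ⟨(P.map u q.1.1, q.1.2), by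
    rw [← FunctorToTypes.map_comp_apply]
    exact q.2⟩

/-- Every object of `Set/P1` arises from a cartesian transformation to `P`:
(i) the first projections form a natural transformation `α : Q ⟶ P`;
(ii) every naturality square of `α` is a pullback; and
(iii) the second projection `β : Q.obj PUnit → C` is a bijection with
`α.app PUnit = f ∘ β`. -/
theorem slice_object_is_cartesian (P : Type u ⥤ Type u) (C : Type u)
    (f : C → P.obj PUnit) :
    (∀ (X Y : Type u) (u : X ⟶ Y) (q : Qobj P C f X),
        (Qmap P C f u q).1.1 = P.map u q.1.1)
    ∧ (∀ (X Y : Type u) (u : X ⟶ Y),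
        Function.Bijective (fun q : Qobj P C f X =>
          (⟨(Qmap P C f u q, q.1.1), rfl⟩ :
            {qy : Qobj P C f Y × P.obj X // qy.1.1.1 = P.map u qy.2})))
    ∧ Function.Bijective (fun q : Qobj P C f PUnit => q.1.2)
    ∧ (∀ q : Qobj P C f PUnit, q.1.1 = f q.1.2) := by
  have key : ∀ q : Qobj P C f PUnit, q.1.1 = f q.1.2 := by
    intro q
    have h := q.2
    have : (TypeCat.ofHom (fun _ => PUnit.unit) : PUnit ⟶ PUnit) = 𝟙 PUnit := rfl
    rw [this, FunctorToTypes.map_id_apply] at h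
    exact h
  refine ⟨fun X Y u q => rfl, fun X Y u => ⟨?_, ?_⟩, ⟨?_, ?_⟩, key⟩
  · intro q q' h
    have h1 : P.map u q.1.1 = P.map u q'.1.1 :=
      congrArg (fun z => z.1.1.1.1) h
    have h2 : q.1.1 = q'.1.1 := congrArg (fun z => z.1.2) h
    have h3 : q.1.2 = q'.1.2 := congrArg (fun z => z.1.1.1.2) h
    exact Subtype.ext (Prod.ext h2 h3)
  · rintro ⟨⟨qY, y⟩, h⟩
    refine ⟨⟨(y, qY.1.2), ?_⟩, ?_⟩
    · have h2 := qY.2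
      rw [h, ← FunctorToTypes.map_comp_apply] at h2
      exact h2
    · apply Subtype.ext
      refine Prod.ext (Subtype.ext (Prod.ext h.symm rfl)) rfl
  · intro q q' h
    have h' : q.1.2 = q'.1.2 := h
    exact Subtype.ext (Prod.ext ((key q).trans (h' ▸ (key q').symm)) h')
  · intro c
    exact ⟨⟨(f c, c), by
      have : (TypeCat.ofHom (fun _ => PUnit.unit) : PUnit ⟶ PUnit) = 𝟙 PUnit := rfl
      rw [this, FunctorToTypes.map_id_apply]⟩, rfl⟩
end

section
/- The slice equivalence for cartesian transformations: let P : Type u ⥤ Type u be a functor. Let Cart/P be the category whose objects are pairs (Q, α) of a functor Q : Type u ⥤ Type u and a natural transformation α : Q ⟶ P all of whose naturality squares are pullbacks of types, and whose morphisms (Q, α) → (Q', α') are natural transformations φ : Q ⟶ Q' with φ ≫ α' = α. Then the functor Cart/P → Over (P.obj PUnit) sending (Q, α) to the object α.app PUnit : Q.obj PUnit → P.obj PUnit, and a morphism φ to φ.app PUnit, is an equivalence of categories. -/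
universe u

open CategoryTheory

/-- An object of the category `Cart/P`: a functor `Q : Type u ⥤ Type u` together with a
cartesian natural transformation `α : Q ⟶ P` (every naturality square is a pullback of
types). -/
structure CartOver (P : Type u ⥤ Type u) where
  Q : Type u ⥤ Type u
  α : Q ⟶ P
  cart : ∀ {X Y : Type u} (u : X ⟶ Y),
    Function.Bijective (fun q : Q.obj X =>
      (⟨(Q.map u q, α.app X q), NatTrans.naturality_apply α u q⟩ :
        {qy : Q.obj Y × P.obj X // α.app Y qy.1 = P.map u qy.2}))

/-- The category structure on `Cart/P`: morphisms `(Q, α) → (Q', α')` are natural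
transformations `φ : Q ⟶ Q'` with `φ ≫ α' = α`. -/
instance CartOver.category (P : Type u ⥤ Type u) : Category (CartOver P) where
  Hom A B := {φ : A.Q ⟶ B.Q // φ ≫ B.α = A.α}
  id A := ⟨𝟙 A.Q, Category.id_comp _⟩
  comp f g := ⟨f.1 ≫ g.1, by rw [Category.assoc, g.2, f.2]⟩
  id_comp f := Subtype.ext (Category.id_comp _)
  comp_id f := Subtype.ext (Category.comp_id _)
  assoc f g h := Subtype.ext (Category.assoc _ _ _)

/-- The functor `Cart/P → Set/P1` sending a cartesian transformation `(Q, α)` to its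
value `α.app PUnit : Q.obj PUnit → P.obj PUnit` on the terminal object. -/
def toSlice (P : Type u ⥤ Type u) : CartOver P ⥤ Over (P.obj PUnit) where
  obj A := Over.mk (A.α.app PUnit)
  map {A B} f := Over.homMk (f.1.app PUnit) (by dsimp; rw [← NatTrans.comp_app, f.2])

namespace CartOverProof

variable {P : Type u ⥤ Type u}

/-- The unique map to the point. -/
def pt (X : Type u) : X ⟶ PUnit.{u+1} := TypeCat.ofHom fun _ => PUnit.unit

lemma pt_unique {X : Type u} (f : X ⟶ PUnit.{u+1}) : f = pt X := ConcreteCategory.hom_ext _ _ fun _ => rfl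

lemma comp_pt {X Y : Type u} (u : X ⟶ Y) : u ≫ pt Y = pt X := rfl

lemma pt_punit : pt PUnit.{u+1} = 𝟙 _ := ConcreteCategory.hom_ext _ _ fun _ => rfl

/-- Injectivity part of the cartesian condition. -/
lemma cart_inj (B : CartOver P) {X Y : Type u} (u : X ⟶ Y) {q q' : B.Q.obj X}
    (h1 : B.Q.map u q = B.Q.map u q') (h2 : B.α.app X q = B.α.app X q') : q = q' := by
  apply (B.cart u).injective
  exact Subtype.ext (Prod.ext h1 h2)

/-- The cartesian condition as an equiv. -/
noncomputable def cartEquiv (B : CartOver P) {X Y : Type u} (u : X ⟶ Y) :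
    B.Q.obj X ≃ {qy : B.Q.obj Y × P.obj X // B.α.app Y qy.1 = P.map u qy.2} :=
  Equiv.ofBijective _ (B.cart u)

lemma cartEquiv_symm_spec (B : CartOver P) {X Y : Type u} (u : X ⟶ Y)
    (y : {qy : B.Q.obj Y × P.obj X // B.α.app Y qy.1 = P.map u qy.2}) :
    B.Q.map u ((cartEquiv B u).symm y) = y.1.1 ∧
      B.α.app X ((cartEquiv B u).symm y) = y.1.2 := by
  have h := (cartEquiv B u).apply_symm_apply y
  exact ⟨congrArg (fun z => z.1.1) h, congrArg (fun z => z.1.2) h⟩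

section Lift

variable (A B : CartOver P) (g : A.Q.obj PUnit ⟶ B.Q.obj PUnit)
  (hg : g ≫ B.α.app PUnit = A.α.app PUnit)

/-- The lift of a map on points to a natural transformation, at a single type. -/
noncomputable def liftApp (X : Type u) (q : A.Q.obj X) : B.Q.obj X :=
  (cartEquiv B (pt X)).symm
    ⟨(g (A.Q.map (pt X) q), A.α.app X q),
      (ConcreteCategory.congr_hom hg _).trans (NatTrans.naturality_apply A.α (pt X) q)⟩

lemma liftApp_spec1 (X : Type u) (q : A.Q.obj X) :
    B.Q.map (pt X) (liftApp A B g hg X q) = g (A.Q.map (pt X) q) :=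
  (cartEquiv_symm_spec B (pt X) _).1

lemma liftApp_spec2 (X : Type u) (q : A.Q.obj X) :
    B.α.app X (liftApp A B g hg X q) = A.α.app X q :=
  (cartEquiv_symm_spec B (pt X) _).2

lemma liftApp_natural {X Y : Type u} (u : X ⟶ Y) (q : A.Q.obj X) :
    liftApp A B g hg Y (A.Q.map u q) = B.Q.map u (liftApp A B g hg X q) := by
  apply cart_inj B (pt Y)
  · rw [liftApp_spec1]
    have h1 : A.Q.map (pt Y) (A.Q.map u q) = A.Q.map (pt X) q := by
      rw [← FunctorToTypes.map_comp_apply, comp_pt]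
    have h2 : B.Q.map (pt Y) (B.Q.map u (liftApp A B g hg X q)) =
        B.Q.map (pt X) (liftApp A B g hg X q) := by
      rw [← FunctorToTypes.map_comp_apply, comp_pt]
    rw [h1, h2, liftApp_spec1]
  · rw [liftApp_spec2]
    have h3 : B.α.app Y (B.Q.map u (liftApp A B g hg X q)) =
        P.map u (B.α.app X (liftApp A B g hg X q)) := NatTrans.naturality_apply B.α u _
    rw [h3, liftApp_spec2]
    exact NatTrans.naturality_apply A.α u q

lemma liftApp_punit (q : A.Q.obj PUnit) : liftApp A B g hg PUnit q = g q := by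
  have h := liftApp_spec1 A B g hg PUnit q
  rwa [pt_punit, FunctorToTypes.map_id_apply, FunctorToTypes.map_id_apply] at h

/-- The lift of a map on points to a morphism in `Cart/P`. -/
noncomputable def liftHom : A ⟶ B :=
  ⟨{ app := fun X => TypeCat.ofHom (liftApp A B g hg X)
     naturality := by intro X Y u; exact ConcreteCategory.hom_ext _ _ fun q => liftApp_natural A B g hg u q },
   by
    apply NatTrans.ext
    funext X
    exact ConcreteCategory.hom_ext _ _ fun q => liftApp_spec2 A B g hg X q⟩

end Lift

/-- The preimage object for essential surjectivity. -/
def preObj (P : Type u ⥤ Type u) (E : Type u) (f : E ⟶ P.obj PUnit) : CartOver P where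
  Q :=
    { obj := fun X => {ep : E × P.obj X // f ep.1 = P.map (pt X) ep.2}
      map := fun {X Y} u => TypeCat.ofHom fun ep =>
        ⟨(ep.1.1, P.map u ep.1.2), by
          rw [← FunctorToTypes.map_comp_apply, comp_pt]; exact ep.2⟩
      map_id := fun X => ConcreteCategory.hom_ext _ _ fun ep => Subtype.ext (by simp)
      map_comp := fun u v => ConcreteCategory.hom_ext _ _ fun ep => Subtype.ext (by simp) }
  α :=
    { app := fun X => TypeCat.ofHom fun ep => ep.1.2
      naturality := fun X Y u => rfl }
  cart := by
    intro X Y u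
    constructor
    · intro ep ep' h
      have h1 := congrArg (fun z => z.1.1.1.1) h
      have h2 := congrArg (fun z => z.1.2) h
      exact Subtype.ext (Prod.ext h1 h2)
    · rintro ⟨⟨⟨⟨e, p'⟩, h'⟩, p⟩, hc⟩
      dsimp at hc
      refine ⟨⟨(e, p), ?_⟩, ?_⟩
      · rw [← comp_pt u, FunctorToTypes.map_comp_apply, ← hc]; exact h'
      · subst hc; rfl

/-- The comparison iso for essential surjectivity. -/
noncomputable def preIso (P : Type u ⥤ Type u) (E : Type u) (f : E ⟶ P.obj PUnit) :
    (toSlice P).obj (preObj P E f) ≅ Over.mk f := by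
  refine Over.isoMk (Equiv.toIso ?_) ?_
  · exact
      { toFun := fun (ep : {ep : E × P.obj PUnit // f ep.1 = P.map (pt PUnit) ep.2}) => ep.1.1
        invFun := fun e => (⟨(e, f e), by rw [pt_punit, FunctorToTypes.map_id_apply]⟩ :
            {ep : E × P.obj PUnit // f ep.1 = P.map (pt PUnit) ep.2})
        left_inv := by
          rintro (⟨⟨e, p⟩, h⟩ : {ep : E × P.obj PUnit // f ep.1 = P.map (pt PUnit) ep.2})
          apply Subtype.ext
          dsimp
          rw [h, pt_punit, FunctorToTypes.map_id_apply]
        right_inv := fun e => rfl }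
  · ext ⟨⟨e, p⟩, h⟩
    dsimp [toSlice, preObj]
    exact h.trans (by rw [pt_punit, FunctorToTypes.map_id_apply])

instance full (P : Type u ⥤ Type u) : (toSlice P).Full := by
  constructor
  intro A B g
  have hg : g.left ≫ B.α.app PUnit = A.α.app PUnit := by simpa [toSlice] using Over.w g
  refine ⟨liftHom A B g.left hg, ?_⟩
  apply CategoryTheory.Comma.hom_ext
  · refine ConcreteCategory.hom_ext _ _ fun q => ?_
    exact liftApp_punit A B g.left hg q
  · apply Subsingleton.elim

instance faithful (P : Type u ⥤ Type u) : (toSlice P).Faithful := by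
  constructor
  intro A B f f' h
  have h0 : f.1.app PUnit = f'.1.app PUnit := congrArg CommaMorphism.left h
  apply Subtype.ext
  apply NatTrans.ext
  funext X
  refine ConcreteCategory.hom_ext _ _ fun q => ?_
  apply cart_inj B (pt X)
  · have n1 : B.Q.map (pt X) (f.1.app X q) = f.1.app PUnit (A.Q.map (pt X) q) :=
      (NatTrans.naturality_apply f.1 (pt X) q).symm
    have n2 : B.Q.map (pt X) (f'.1.app X q) = f'.1.app PUnit (A.Q.map (pt X) q) :=
      (NatTrans.naturality_apply f'.1 (pt X) q).symm
    rw [n1, n2, h0]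
  · have e1 : B.α.app X (f.1.app X q) = A.α.app X q := ConcreteCategory.congr_hom (congrArg (fun (t : A.Q ⟶ P) => t.app X) f.2) q
    have e2 : B.α.app X (f'.1.app X q) = A.α.app X q := ConcreteCategory.congr_hom (congrArg (fun (t : A.Q ⟶ P) => t.app X) f'.2) q
    rw [e1, e2]

instance essSurj (P : Type u ⥤ Type u) : (toSlice P).EssSurj := by
  constructor
  intro Y
  exact ⟨preObj P Y.left Y.hom, ⟨(preIso P Y.left Y.hom).trans (eqToIso (by cases Y; rfl))⟩⟩

end CartOverProof

/-- The slice equivalence for cartesian transformations: evaluation at the terminal object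
is an equivalence of categories `Cart/P ≃ Set/P1`. -/
theorem toSlice_isEquivalence (P : Type u ⥤ Type u) :
    (toSlice P).IsEquivalence := by
  exact
    { faithful := CartOverProof.faithful P
      full := CartOverProof.full P
      essSurj := CartOverProof.essSurj P }
end

section
/- The free monad on a polynomial endofunctor is cartesian: let P be a PFunctor, and for a function u : A → A' write FMmap u := graft (fun a => leaf (u a)) : FM P A → FM P A'. Then (i) the unit is cartesian: for every u : A → A', the map A → {(a', T) : A' × FM P A // leaf a' = FMmap u T}, a ↦ (u a, leaf a), is a bijection; and (ii) the multiplication μ_A := graft (id : FM P A → FM P A) : FM P (FM P A) → FM P A is cartesian: for every u : A → A', the map FM P (FM P A) → {(S, T) : FM P (FM P A') × FM P A // μ_{A'} S = FMmap u T}, R ↦ (FMmap (FMmap u) R, μ_A R), is a bijection. -/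
universe u

/-- The type of `P`-trees with leaves decorated in `A`: the free `P`-structure on `A`. -/
inductive FM (P : PFunctor.{u}) (A : Type u) : Type u
  | leaf : A → FM P A
  | node : (a : P.A) → (P.B a → FM P A) → FM P A

/-- Grafting of `P`-trees: substitute the tree `g a` for each leaf decorated by `a`. -/
def graft {P : PFunctor.{u}} {A A' : Type u} (g : A → FM P A') : FM P A → FM P A'
  | .leaf a => g a
  | .node a f => .node a fun e => graft g (f e)

/-- The functorial action of the free monad: relabelling of leaves. -/
def FMmap {P : PFunctor.{u}} {A A' : Type u} (u : A → A') : FM P A → FM P A' :=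
  graft fun a => FM.leaf (u a)

/-- Naturality of the multiplication `μ : FM P (FM P A) → FM P A`. -/
theorem mu_naturality {P : PFunctor.{u}} {A A' : Type u} (u : A → A') :
    ∀ R : FM P (FM P A),
      graft (id : FM P A' → FM P A') (FMmap (FMmap u) R)
        = FMmap u (graft (id : FM P A → FM P A) R)
  | .leaf _ => rfl
  | .node a f => congrArg (FM.node a) (funext fun e => mu_naturality u (f e))


private theorem FM.inj2 {P : PFunctor.{u}} {A A' : Type u} (u : A → A') :
    ∀ R R' : FM P (FM P A), FMmap (FMmap u) R = FMmap (FMmap u) R' →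
      graft (id : FM P A → FM P A) R = graft id R' → R = R'
  | .leaf t, .leaf t', _, h2 => by
      simp only [graft, id] at h2; exact congrArg FM.leaf h2
  | .leaf t, .node a f, h1, _ => by simp [FMmap, graft] at h1
  | .node a f, .leaf t, h1, _ => by simp [FMmap, graft] at h1
  | .node a f, .node a' f', h1, h2 => by
      simp only [FMmap, graft] at h1 h2
      obtain ⟨rfl, hf⟩ := FM.node.inj h1
      obtain ⟨-, hg⟩ := FM.node.inj h2
      have hf' := funext_iff.mp (eq_of_heq hf)
      have hg' := funext_iff.mp (eq_of_heq hg)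
      exact congrArg (FM.node a) (funext fun e =>
        FM.inj2 u (f e) (f' e) (hf' e) (hg' e))

private theorem FM.surj2 {P : PFunctor.{u}} {A A' : Type u} (u : A → A') :
    ∀ (S : FM P (FM P A')) (T : FM P A),
      graft (id : FM P A' → FM P A') S = FMmap u T →
      ∃ R : FM P (FM P A), FMmap (FMmap u) R = S ∧ graft (id : FM P A → FM P A) R = T
  | .leaf T', T, h => by
      refine ⟨.leaf T, ?_, rfl⟩
      simp only [FMmap, graft, id] at h ⊢
      rw [← h]
  | .node a f, T, h => by
      cases T with
      | leaf a0 => simp [FMmap, graft] at h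
      | node a' g =>
        simp only [FMmap, graft] at h
        obtain ⟨rfl, hf⟩ := FM.node.inj h
        have hf' := funext_iff.mp (eq_of_heq hf)
        choose r hr1 hr2 using fun e => FM.surj2 u (f e) (g e) (hf' e)
        exact ⟨.node a r, congrArg (FM.node a) (funext hr1),
          congrArg (FM.node a) (funext hr2)⟩

/-- The free monad on a polynomial endofunctor is cartesian: the naturality squares of
the unit (`leaf`) and of the multiplication (`graft id`) are pullbacks of types. -/
theorem free_monad_cartesian (P : PFunctor.{u}) (A A' : Type u) (u : A → A') :
    Function.Bijective (fun a : A =>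
      (⟨(u a, FM.leaf a), rfl⟩ :
        {aT : A' × FM P A // FM.leaf aT.1 = FMmap u aT.2}))
    ∧ Function.Bijective (fun R : FM P (FM P A) =>
      (⟨(FMmap (FMmap u) R, graft (id : FM P A → FM P A) R), mu_naturality u R⟩ :
        {ST : FM P (FM P A') × FM P A //
          graft (id : FM P A' → FM P A') ST.1 = FMmap u ST.2})) := by

  constructor
  · constructor
    · intro a b h
      have := congrArg (fun x => (x : {aT : A' × FM P A // FM.leaf aT.1 = FMmap u aT.2}).1.2) h
      simpa using this
    · rintro ⟨⟨a', T⟩, h⟩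
      cases T with
      | leaf a =>
        simp only [FMmap, graft] at h
        exact ⟨a, Subtype.ext (Prod.ext (FM.leaf.inj h).symm rfl)⟩
      | node b f => simp [FMmap, graft] at h
  · constructor
    · intro R R' h
      have h1 := congrArg (fun x => (x : {ST : FM P (FM P A') × FM P A //
          graft (id : FM P A' → FM P A') ST.1 = FMmap u ST.2}).1.1) h
      have h2 := congrArg (fun x => (x : {ST : FM P (FM P A') × FM P A //
          graft (id : FM P A' → FM P A') ST.1 = FMmap u ST.2}).1.2) h
      exact FM.inj2 u R R' h1 h2
    · rintro ⟨⟨S, T⟩, h⟩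
      obtain ⟨R, h1, h2⟩ := FM.surj2 u S T h
      exact ⟨R, Subtype.ext (Prod.ext h1 h2)⟩
end

section
/- The free P-structure is the least fixpoint computed as a sequential colimit: let P be a PFunctor with P.B b finite for every b : P.A, and let A be a type. Define X : ℕ → Type by X 0 := PEmpty and X (n+1) := A ⊕ (Σ b : P.A, (P.B b → X n)), and maps j : Π n, X n → FM P A by j 0 := PEmpty.elim, j (n+1) (Sum.inl a) := leaf a, and j (n+1) (Sum.inr ⟨b, f⟩) := node b (fun e => j n (f e)). Then every element of FM P A lies in the range of j n for some n : ℕ (so FM P A = ⋃ n, (A + P)^n(∅)). -/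
universe u

/-- The `n`-th stage `(A + P)^n (∅)` of the sequential colimit computing `FM P A`. -/
def seqX (P : PFunctor.{u}) (A : Type u) : ℕ → Type u
  | 0 => PEmpty
  | n + 1 => A ⊕ (Σ b : P.A, (P.B b → seqX P A n))

/-- The canonical maps from the stages of the sequential colimit into `FM P A`. -/
def seqJ (P : PFunctor.{u}) (A : Type u) : (n : ℕ) → seqX P A n → FM P A
  | 0, x => PEmpty.elim x
  | _ + 1, Sum.inl a => FM.leaf a
  | n + 1, Sum.inr ⟨b, f⟩ => FM.node b fun e => seqJ P A n (f e)

/-- Inclusion of stage `n` into stage `n+1`. -/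
def seqUp (P : PFunctor.{u}) (A : Type u) : (n : ℕ) → seqX P A n → seqX P A (n + 1)
  | 0, x => PEmpty.elim x
  | _ + 1, Sum.inl a => Sum.inl a
  | n + 1, Sum.inr ⟨b, f⟩ => Sum.inr ⟨b, fun e => seqUp P A n (f e)⟩

theorem seqJ_seqUp (P : PFunctor.{u}) (A : Type u) :
    ∀ (n : ℕ) (x : seqX P A n), seqJ P A (n + 1) (seqUp P A n x) = seqJ P A n x
  | 0, x => x.elim
  | _ + 1, Sum.inl _ => rfl
  | n + 1, Sum.inr ⟨b, f⟩ => by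
    simp only [seqUp, seqJ]
    exact congrArg (FM.node b) (funext fun e => seqJ_seqUp P A n (f e))

theorem range_mono (P : PFunctor.{u}) (A : Type u) {m n : ℕ} (h : m ≤ n) :
    Set.range (seqJ P A m) ⊆ Set.range (seqJ P A n) := by
  induction h with
  | refl => exact le_refl _
  | step _ ih =>
    refine ih.trans ?_
    rintro _ ⟨x, rfl⟩
    exact ⟨seqUp P A _ x, seqJ_seqUp P A _ x⟩

/-- The free `P`-structure is the least fixpoint computed as a sequential colimit: if all
arities of `P` are finite, every `P`-tree lies in the image of some finite stage
`(A + P)^n (∅)`. -/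

theorem FM_eq_union_of_stages (P : PFunctor.{u}) (hfin : ∀ b : P.A, Finite (P.B b))
    (A : Type u) (T : FM P A) :
    ∃ n : ℕ, T ∈ Set.range (seqJ P A n) := by
  induction T with
  | leaf a => exact ⟨1, Sum.inl a, rfl⟩
  | node b f ih =>
    have := hfin b
    choose g hg using ih
    obtain ⟨N, hN⟩ := Finite.exists_le g
    refine ⟨N + 1, Sum.inr ⟨b, fun e => ?_⟩, ?_⟩
    · exact (range_mono P A (hN e) (hg e)).choose
    · simp only [seqJ]
      exact congrArg (FM.node b) (funext fun e => (range_mono P A (hN e) (hg e)).choose_spec)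
end
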